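/- Let g: ℝ → ℝ be convex and differentiable, λ₂ > 0, f(x) = g(x) + λ₂x², and let x* minimize f. For points x₁, x₂ with f'(x₁)·f'(x₂) ≤ 0 and α₁ − α₂ − 2λ₂(x₁ − x₂) ≠ 0 (where αᵢ = f'(xᵢ)), the two-point quadratic cut lower bound f(x̂) computed in Theorem 4.3 is at least as large as the two-point linear cutting-plane lower bound of Theorem 4.2 (when the latter's denominator α₁ − α₂ is nonzero). -/

import Mathlib

/-!
Each quadratic minorant `qᵢ(x) = f(xᵢ) + αᵢ(x - xᵢ) + λ₂(x - xᵢ)²` dominates its tangent line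
`ℓᵢ(x) = f(xᵢ) + αᵢ(x - xᵢ)` when `λ₂ ≥ 0`, so at the point `x̂` where `q₁ = q₂` the common value is
at least `max(ℓ₁, ℓ₂)(x̂)`. Since the slopes `α₁, α₂` have opposite signs, `max(ℓ₁, ℓ₂)` attains its
minimum at the intersection of the two lines, and that minimum is the linear cutting-plane bound.
-/

/- The intersection point of the lines `y₁ + α₁ (x - x₁)` and `y₂ + α₂ (x - x₂)`, and their common
value there. -/
noncomputable def tangentCutPoint (x₁ y₁ α₁ x₂ y₂ α₂ : ℝ) : ℝ :=
  (y₂ - y₁ + α₁ * x₁ - α₂ * x₂) / (α₁ - α₂)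

noncomputable def tangentCutValue (x₁ y₁ α₁ x₂ y₂ α₂ : ℝ) : ℝ :=
  (α₁ * y₂ - α₂ * y₁ + α₁ * α₂ * (x₁ - x₂)) / (α₁ - α₂)

section TangentCut

variable {x₁ y₁ α₁ x₂ y₂ α₂ : ℝ}

theorem add_mul_sub_eq_tangentCutValue_left (h : α₁ - α₂ ≠ 0) (x : ℝ) :
    y₁ + α₁ * (x - x₁) =
      tangentCutValue x₁ y₁ α₁ x₂ y₂ α₂ + α₁ * (x - tangentCutPoint x₁ y₁ α₁ x₂ y₂ α₂) := by
  unfold tangentCutValue tangentCutPoint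
  field_simp
  ring

theorem add_mul_sub_eq_tangentCutValue_right (h : α₁ - α₂ ≠ 0) (x : ℝ) :
    y₂ + α₂ * (x - x₂) =
      tangentCutValue x₁ y₁ α₁ x₂ y₂ α₂ + α₂ * (x - tangentCutPoint x₁ y₁ α₁ x₂ y₂ α₂) := by
  unfold tangentCutValue tangentCutPoint
  field_simp
  ring

theorem nonneg_max_mul_of_mul_nonpos (hα : α₁ * α₂ ≤ 0) (t : ℝ) : 0 ≤ max (α₁ * t) (α₂ * t) := by
  by_contra! h
  have h₁ : α₁ * t < 0 := (le_max_left _ _).trans_lt h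
  have h₂ : α₂ * t < 0 := (le_max_right _ _).trans_lt h
  nlinarith [mul_pos_of_neg_of_neg h₁ h₂, mul_nonpos_of_nonpos_of_nonneg hα (sq_nonneg t)]

theorem tangentCutValue_le_max (hα : α₁ * α₂ ≤ 0) (h : α₁ - α₂ ≠ 0) (x : ℝ) :
    tangentCutValue x₁ y₁ α₁ x₂ y₂ α₂ ≤ max (y₁ + α₁ * (x - x₁)) (y₂ + α₂ * (x - x₂)) := by
  rw [add_mul_sub_eq_tangentCutValue_left h, add_mul_sub_eq_tangentCutValue_right h,
    max_add_add_left]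
  exact le_add_of_nonneg_right (nonneg_max_mul_of_mul_nonpos hα _)

end TangentCut

theorem quadMinorant_eq_of_eq_div {x₁ y₁ α₁ x₂ y₂ α₂ lam xhat : ℝ}
    (hden : α₁ - α₂ - 2 * lam * (x₁ - x₂) ≠ 0)
    (hxhat : xhat = (-y₁ + y₂ + α₁ * x₁ - α₂ * x₂ - lam * (x₁ ^ 2 - x₂ ^ 2)) /
      (α₁ - α₂ - 2 * lam * (x₁ - x₂))) :
    y₁ + α₁ * (xhat - x₁) + lam * (xhat - x₁) ^ 2 = y₂ + α₂ * (xhat - x₂) + lam * (xhat - x₂) ^ 2 := by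
  have hk : xhat * (α₁ - α₂ - 2 * lam * (x₁ - x₂)) =
      -y₁ + y₂ + α₁ * x₁ - α₂ * x₂ - lam * (x₁ ^ 2 - x₂ ^ 2) := by
    rw [hxhat]
    exact div_mul_cancel₀ _ hden
  linear_combination hk

theorem stmt_18_general (lam2 : ℝ) (hlam2 : 0 < lam2)
    (f : ℝ → ℝ)
    (x₁ x₂ α₁ α₂ : ℝ)
    (hsign : α₁ * α₂ ≤ 0)
    (hdenq : α₁ - α₂ - 2 * lam2 * (x₁ - x₂) ≠ 0)
    (hdenl : α₁ - α₂ ≠ 0)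
    (xhat : ℝ)
    (hxhat : xhat = (-f x₁ + f x₂ + α₁ * x₁ - α₂ * x₂ - lam2 * (x₁ ^ 2 - x₂ ^ 2)) /
      (α₁ - α₂ - 2 * lam2 * (x₁ - x₂))) :
    f x₁ + α₁ * (xhat - x₁) + lam2 * (xhat - x₁) ^ 2 ≥
      (α₁ * f x₂ - α₂ * f x₁ + α₁ * α₂ * (x₁ - x₂)) / (α₁ - α₂) := by
  have hq := quadMinorant_eq_of_eq_div hdenq hxhat
  have hq₁ : f x₁ + α₁ * (xhat - x₁) ≤ f x₁ + α₁ * (xhat - x₁) + lam2 * (xhat - x₁) ^ 2 :=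
    le_add_of_nonneg_right (by positivity)
  have hq₂ : f x₂ + α₂ * (xhat - x₂) ≤ f x₁ + α₁ * (xhat - x₁) + lam2 * (xhat - x₁) ^ 2 :=
    hq ▸ le_add_of_nonneg_right (by positivity)
  exact (tangentCutValue_le_max hsign hdenl xhat).trans (max_le hq₁ hq₂)

theorem stmt_18 (g : ℝ → ℝ) (hconv : ConvexOn ℝ Set.univ g)
    (hdiff : Differentiable ℝ g) (lam2 : ℝ) (hlam2 : 0 < lam2)
    (f : ℝ → ℝ) (hf : ∀ x, f x = g x + lam2 * x ^ 2)
    (xstar : ℝ) (hmin : ∀ x, f xstar ≤ f x)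
    (x₁ x₂ α₁ α₂ : ℝ) (hα₁ : α₁ = deriv f x₁) (hα₂ : α₂ = deriv f x₂)
    (hsign : α₁ * α₂ ≤ 0)
    (hdenq : α₁ - α₂ - 2 * lam2 * (x₁ - x₂) ≠ 0)
    (hdenl : α₁ - α₂ ≠ 0)
    (xhat : ℝ)
    (hxhat : xhat = (-f x₁ + f x₂ + α₁ * x₁ - α₂ * x₂ - lam2 * (x₁ ^ 2 - x₂ ^ 2)) /
      (α₁ - α₂ - 2 * lam2 * (x₁ - x₂))) :
    f x₁ + α₁ * (xhat - x₁) + lam2 * (xhat - x₁) ^ 2 ≥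
      (α₁ * f x₂ - α₂ * f x₁ + α₁ * α₂ * (x₁ - x₂)) / (α₁ - α₂) :=
  stmt_18_general lam2 hlam2 f x₁ x₂ α₁ α₂ hsign hdenq hdenl xhat hxhat
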